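/- arXiv:math/0510250 — 2 statements merged into one kernel-verified Lean document; each statement's English description precedes it below -/
import Mathlib

section
/- Let Q = (Q^i_j(u)) be a smooth matrix-valued function on U, invertible at every point with inverse W := Q^{-1}, satisfying Γ^i_{jl} Q^l_k = Γ^i_{kl} Q^l_j on U. Then for all indices i, s, j: ∂_{u^i} g_{sj} − ∂_{u^s} g_{ij} = (∂_{v^i} g_{sm} − ∂_{v^s} g_{im}) Q^m_j, where ∂_{v^i} := W^r_i ∂_{u^r} acts as a first-order differential operator on functions of u. -/
open scoped BigOperators
open Matrix

/-- Partial derivative `∂f/∂xⁱ` at `x`. -/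
noncomputable def pd {n : ℕ} (f : (Fin n → ℝ) → ℝ) (i : Fin n) (x : Fin n → ℝ) : ℝ :=
  fderiv ℝ f x (Pi.single i 1)

/-- Christoffel symbols `Γ^k_{ij}` of the metric with contravariant components `gU`
(the `g^{ij}`) and covariant components `gL` (the `g_{ij}`):
`Γ^k_{ij} = (1/2) g^{ks}(∂_i g_{sj} + ∂_j g_{si} − ∂_s g_{ij})`. -/
noncomputable def christoffel {n : ℕ}
    (gU gL : (Fin n → ℝ) → Matrix (Fin n) (Fin n) ℝ)
    (k i j : Fin n) (x : Fin n → ℝ) : ℝ :=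
  (1 / 2) * ∑ s, gU x k s *
    (pd (fun y => gL y s j) i x + pd (fun y => gL y s i) j x - pd (fun y => gL y i j) s x)

/-- Curvature tensor `R_{ijk}{}^s = ∂_i Γ^s_{jk} − ∂_j Γ^s_{ik} + Γ^s_{im}Γ^m_{jk} − Γ^s_{jm}Γ^m_{ik}`. -/
noncomputable def curvature {n : ℕ}
    (gU gL : (Fin n → ℝ) → Matrix (Fin n) (Fin n) ℝ)
    (i j k s : Fin n) (x : Fin n → ℝ) : ℝ :=
  pd (christoffel gU gL s j k) i x - pd (christoffel gU gL s i k) j x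
    + ∑ m, christoffel gU gL s i m x * christoffel gU gL m j k x
    - ∑ m, christoffel gU gL s j m x * christoffel gU gL m i k x

/-- Covariant derivative `∇_k V^i_j = ∂_k V^i_j + Γ^i_{km} V^m_j − Γ^m_{kj} V^i_m`
of a (1,1)-tensor `V`. -/
noncomputable def covDer {n : ℕ}
    (gU gL V : (Fin n → ℝ) → Matrix (Fin n) (Fin n) ℝ)
    (k i j : Fin n) (x : Fin n → ℝ) : ℝ :=
  pd (fun y => V y i j) k x + ∑ m, christoffel gU gL i k m x * V x m j
    - ∑ m, christoffel gU gL m k j x * V x i m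

/-- Raised partial derivative `∂^i := η^{is} ∂_{u^s}`. -/
noncomputable def pdUp {n : ℕ} (η : Matrix (Fin n) (Fin n) ℝ)
    (f : (Fin n → ℝ) → ℝ) (i : Fin n) (x : Fin n → ℝ) : ℝ :=
  ∑ s, η i s * pd f s x



lemma Tterm {n : ℕ} (C : Fin n → Fin n → Fin n → ℝ)
    (L : Matrix (Fin n) (Fin n) ℝ) (M V : Matrix (Fin n) (Fin n) ℝ) (b : Fin n)
    (hGam : ∀ a b c, ∑ l, C a b l * M l c = ∑ l, C a c l * M l b)
    (hMV : ∀ a b, ∑ r, M a r * V r b = if a = b then (1:ℝ) else 0)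
    (a j : Fin n) :
    (∑ m, (∑ r, V r a * (∑ p, L b p * C p r m)) * M m j)
      = ∑ p, L b p * C p j a := by
  calc (∑ m, (∑ r, V r a * (∑ p, L b p * C p r m)) * M m j)
      = ∑ m, ∑ r, ∑ p, V r a * L b p * (C p r m * M m j) := by
        refine Finset.sum_congr rfl fun m _ => ?_
        rw [Finset.sum_mul]
        refine Finset.sum_congr rfl fun r _ => ?_
        rw [Finset.mul_sum, Finset.sum_mul]
        exact Finset.sum_congr rfl fun p _ => by ring
    _ = ∑ r, ∑ m, ∑ p, V r a * L b p * (C p r m * M m j) := Finset.sum_comm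
    _ = ∑ r, ∑ p, ∑ m, V r a * L b p * (C p r m * M m j) :=
        Finset.sum_congr rfl fun r _ => Finset.sum_comm
    _ = ∑ p, ∑ r, ∑ m, V r a * L b p * (C p r m * M m j) := Finset.sum_comm
    _ = ∑ p, ∑ r, V r a * L b p * (∑ m, C p r m * M m j) := by
        refine Finset.sum_congr rfl fun p _ => Finset.sum_congr rfl fun r _ => ?_
        rw [Finset.mul_sum]
    _ = ∑ p, ∑ r, V r a * L b p * (∑ m, C p j m * M m r) := by
        refine Finset.sum_congr rfl fun p _ => Finset.sum_congr rfl fun r _ => ?_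
        rw [hGam]
    _ = ∑ p, ∑ r, ∑ m, L b p * C p j m * (M m r * V r a) := by
        refine Finset.sum_congr rfl fun p _ => Finset.sum_congr rfl fun r _ => ?_
        rw [Finset.mul_sum]
        exact Finset.sum_congr rfl fun m _ => by ring
    _ = ∑ p, ∑ m, ∑ r, L b p * C p j m * (M m r * V r a) :=
        Finset.sum_congr rfl fun p _ => Finset.sum_comm
    _ = ∑ p, ∑ m, L b p * C p j m * (∑ r, M m r * V r a) := by
        refine Finset.sum_congr rfl fun p _ => Finset.sum_congr rfl fun m _ => ?_
        rw [Finset.mul_sum]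
    _ = ∑ p, L b p * C p j a := by
        refine Finset.sum_congr rfl fun p _ => ?_
        rw [show (∑ m, L b p * C p j m * (∑ r, M m r * V r a))
              = ∑ m, if m = a then L b p * C p j m else 0 by
            refine Finset.sum_congr rfl fun m _ => ?_
            rw [hMV]
            by_cases h : m = a <;> simp [h]]
        simp

-- core symmetry: ∑_{p,r} K p * V r a * C p r b is symmetric in (a,b)
lemma Tcore {n : ℕ} (C : Fin n → Fin n → Fin n → ℝ) (K : Fin n → ℝ)
    (M V : Matrix (Fin n) (Fin n) ℝ)
    (hGam : ∀ a b c, ∑ l, C a b l * M l c = ∑ l, C a c l * M l b)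
    (hMV : ∀ a b, ∑ r, M a r * V r b = if a = b then (1:ℝ) else 0)
    (a b : Fin n) :
    ∑ p, ∑ r, K p * (V r a * C p r b) = ∑ p, ∑ r, K p * (V r b * C p r a) := by
  have hC : ∀ p r c, C p r c = ∑ t, V t c * (∑ l, C p t l * M l r) := by
    intro p r c
    calc C p r c = ∑ l, C p r l * (if l = c then 1 else 0) := by
          rw [show (∑ l, C p r l * (if l = c then (1:ℝ) else 0))
                = ∑ l, if l = c then C p r l else 0 from
            Finset.sum_congr rfl fun l _ => by by_cases h : l = c <;> simp [h]]
          simp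
      _ = ∑ l, C p r l * (∑ t, M l t * V t c) := by
          refine Finset.sum_congr rfl fun l _ => ?_; rw [hMV]
      _ = ∑ l, ∑ t, C p r l * M l t * V t c := by
          refine Finset.sum_congr rfl fun l _ => ?_
          rw [Finset.mul_sum]
          exact Finset.sum_congr rfl fun t _ => by ring
      _ = ∑ t, ∑ l, C p r l * M l t * V t c := Finset.sum_comm
      _ = ∑ t, (∑ l, C p r l * M l t) * V t c := by
          refine Finset.sum_congr rfl fun t _ => ?_; rw [Finset.sum_mul]
      _ = ∑ t, (∑ l, C p t l * M l r) * V t c := by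
          refine Finset.sum_congr rfl fun t _ => ?_; rw [hGam]
      _ = ∑ t, V t c * (∑ l, C p t l * M l r) := by
          exact Finset.sum_congr rfl fun t _ => by ring
  have expand : ∀ a b : Fin n,
      (∑ p, ∑ r, K p * (V r a * C p r b))
        = ∑ p, ∑ r, ∑ t, K p * V r a * V t b * (∑ l, C p t l * M l r) := by
    intro a b
    refine Finset.sum_congr rfl fun p _ => Finset.sum_congr rfl fun r _ => ?_
    rw [hC p r b, Finset.mul_sum, Finset.mul_sum]
    exact Finset.sum_congr rfl fun t _ => by ring
  rw [expand a b, expand b a]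
  calc (∑ p, ∑ r, ∑ t, K p * V r a * V t b * (∑ l, C p t l * M l r))
      = ∑ p, ∑ t, ∑ r, K p * V r a * V t b * (∑ l, C p t l * M l r) :=
        Finset.sum_congr rfl fun p _ => Finset.sum_comm
    _ = ∑ p, ∑ t, ∑ r, K p * V r a * V t b * (∑ l, C p r l * M l t) := by
        refine Finset.sum_congr rfl fun p _ => Finset.sum_congr rfl fun t _ =>
          Finset.sum_congr rfl fun r _ => ?_
        rw [hGam]
    _ = ∑ p, ∑ r, ∑ t, K p * V t a * V r b * (∑ l, C p t l * M l r) := rfl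
    _ = ∑ p, ∑ r, ∑ t, K p * V r b * V t a * (∑ l, C p t l * M l r) :=
        Finset.sum_congr rfl fun p _ => Finset.sum_congr rfl fun r _ =>
          Finset.sum_congr rfl fun t _ => by ring

-- factor out the m-sum
lemma Tfactor {n : ℕ} (C : Fin n → Fin n → Fin n → ℝ)
    (L M V : Matrix (Fin n) (Fin n) ℝ) (a b j : Fin n) :
    (∑ m, (∑ r, V r a * (∑ p, L m p * C p r b)) * M m j)
      = ∑ p, ∑ r, (∑ m, L m p * M m j) * (V r a * C p r b) := by
  calc (∑ m, (∑ r, V r a * (∑ p, L m p * C p r b)) * M m j)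
      = ∑ m, ∑ r, ∑ p, (L m p * M m j) * (V r a * C p r b) := by
        refine Finset.sum_congr rfl fun m _ => ?_
        rw [Finset.sum_mul]
        refine Finset.sum_congr rfl fun r _ => ?_
        rw [Finset.mul_sum, Finset.sum_mul]
        exact Finset.sum_congr rfl fun p _ => by ring
    _ = ∑ r, ∑ m, ∑ p, (L m p * M m j) * (V r a * C p r b) := Finset.sum_comm
    _ = ∑ r, ∑ p, ∑ m, (L m p * M m j) * (V r a * C p r b) :=
        Finset.sum_congr rfl fun r _ => Finset.sum_comm
    _ = ∑ p, ∑ r, ∑ m, (L m p * M m j) * (V r a * C p r b) := Finset.sum_comm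
    _ = ∑ p, ∑ r, (∑ m, L m p * M m j) * (V r a * C p r b) := by
        refine Finset.sum_congr rfl fun p _ => Finset.sum_congr rfl fun r _ => ?_
        rw [Finset.sum_mul]

lemma key_alg {n : ℕ} (D C : Fin n → Fin n → Fin n → ℝ)
    (L M V : Matrix (Fin n) (Fin n) ℝ)
    (hDsym : ∀ r a b, D r a b = D r b a)
    (hlow : ∀ k a b, (∑ m, L k m * C m a b) = (1/2) * (D a k b + D b k a - D k a b))
    (hGam : ∀ a b c, ∑ l, C a b l * M l c = ∑ l, C a c l * M l b)
    (hMV : ∀ a b, ∑ r, M a r * V r b = if a = b then (1:ℝ) else 0)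
    (i s j : Fin n) :
    D i s j - D s i j =
      ∑ m, ((∑ r, V r i * D r s m) - (∑ r, V r s * D r i m)) * M m j := by
  have hsplit : ∀ r a b : Fin n,
      D r a b = (∑ p, L a p * C p r b) + (∑ p, L b p * C p r a) := by
    intro r a b
    rw [hlow, hlow]
    linarith [hDsym r a b, hDsym b a r, hDsym a b r]
  have step : (∑ m, ((∑ r, V r i * D r s m) - (∑ r, V r s * D r i m)) * M m j)
      = (∑ m, (∑ r, V r i * (∑ p, L s p * C p r m)) * M m j)
        + (∑ m, (∑ r, V r i * (∑ p, L m p * C p r s)) * M m j)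
        - (∑ m, (∑ r, V r s * (∑ p, L i p * C p r m)) * M m j)
        - (∑ m, (∑ r, V r s * (∑ p, L m p * C p r i)) * M m j) := by
    rw [← Finset.sum_add_distrib, ← Finset.sum_sub_distrib, ← Finset.sum_sub_distrib]
    refine Finset.sum_congr rfl fun m _ => ?_
    have e1 : (∑ r, V r i * D r s m)
        = (∑ r, V r i * (∑ p, L s p * C p r m)) + (∑ r, V r i * (∑ p, L m p * C p r s)) := by
      rw [← Finset.sum_add_distrib]
      refine Finset.sum_congr rfl fun r _ => ?_
      rw [hsplit r s m]; ring
    have e2 : (∑ r, V r s * D r i m)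
        = (∑ r, V r s * (∑ p, L i p * C p r m)) + (∑ r, V r s * (∑ p, L m p * C p r i)) := by
      rw [← Finset.sum_add_distrib]
      refine Finset.sum_congr rfl fun r _ => ?_
      rw [hsplit r i m]; ring
    rw [e1, e2]; ring
  rw [step, Tfactor C L M V i s j, Tfactor C L M V s i j,
    Tterm C L M V s hGam hMV i j, Tterm C L M V i hGam hMV s j,
    Tcore C (fun p => ∑ m, L m p * M m j) M V hGam hMV i s,
    hlow s j i, hlow i j s]
  linarith [hDsym j s i, hDsym s j i, hDsym i j s]

theorem stmt_3
    (n : ℕ) (hn : 1 ≤ n)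
    (U : Set (Fin n → ℝ)) (hU_open : IsOpen U) (hU_conn : IsConnected U)
    (hU_sc : SimplyConnectedSpace U)
    (g gL : (Fin n → ℝ) → Matrix (Fin n) (Fin n) ℝ)
    (hg_smooth : ∀ i j, ContDiffOn ℝ (⊤ : ℕ∞) (fun x => g x i j) U)
    (hgL_smooth : ∀ i j, ContDiffOn ℝ (⊤ : ℕ∞) (fun x => gL x i j) U)
    (hg_symm : ∀ x ∈ U, (g x).IsSymm)
    (hg_inv : ∀ x ∈ U, g x * gL x = 1)
    (Q W : (Fin n → ℝ) → Matrix (Fin n) (Fin n) ℝ)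
    (hQ_smooth : ∀ i j, ContDiffOn ℝ (⊤ : ℕ∞) (fun x => Q x i j) U)
    (hQW : ∀ x ∈ U, Q x * W x = 1 ∧ W x * Q x = 1)
    (hGamQ : ∀ x ∈ U, ∀ i j k,
      ∑ l, christoffel g gL i j l x * Q x l k = ∑ l, christoffel g gL i k l x * Q x l j)
    :
    ∀ x ∈ U, ∀ i s j,
      pd (fun y => gL y s j) i x - pd (fun y => gL y i j) s x =
      ∑ m, ((∑ r, W x r i * pd (fun y => gL y s m) r x) -
            (∑ r, W x r s * pd (fun y => gL y i m) r x)) * Q x m j := by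
  intro x hx i s j
  -- gL is symmetric on U
  have hgL_symm : ∀ y ∈ U, gL y = (gL y)ᵀ := by
    intro y hy
    have h1 : g y * gL y = 1 := hg_inv y hy
    have h2 : (gL y)ᵀ * g y = 1 := by
      have h3 := congrArg Matrix.transpose h1
      rw [Matrix.transpose_mul, Matrix.transpose_one, hg_symm y hy] at h3
      exact h3
    calc gL y = 1 * gL y := (one_mul _).symm
      _ = ((gL y)ᵀ * g y) * gL y := by rw [h2]
      _ = (gL y)ᵀ * (g y * gL y) := by rw [Matrix.mul_assoc]
      _ = (gL y)ᵀ := by rw [h1, mul_one]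
  have hDsym : ∀ (r a b : Fin n),
      pd (fun y => gL y a b) r x = pd (fun y => gL y b a) r x := by
    intro r a b
    unfold pd
    congr 1
    apply Filter.EventuallyEq.fderiv_eq
    filter_upwards [hU_open.mem_nhds hx] with y hy
    have h := congrFun (congrFun (hgL_symm y hy) a) b
    simpa [Matrix.transpose_apply] using h
  have hLGd : ∀ k p, (∑ m, gL x k m * g x m p) = if k = p then (1:ℝ) else 0 := by
    intro k p
    have hLG : gL x * g x = 1 := mul_eq_one_comm.mp (hg_inv x hx)
    have h := congrFun (congrFun hLG k) p
    rw [Matrix.mul_apply] at h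
    rw [h, Matrix.one_apply]
  have hMV : ∀ a b, (∑ r, Q x a r * W x r b) = if a = b then (1:ℝ) else 0 := by
    intro a b
    have h := congrFun (congrFun (hQW x hx).1 a) b
    rw [Matrix.mul_apply] at h
    rw [h, Matrix.one_apply]
  have hlow : ∀ k a b, (∑ m, gL x k m * christoffel g gL m a b x)
      = (1/2) * (pd (fun y => gL y k b) a x + pd (fun y => gL y k a) b x
          - pd (fun y => gL y a b) k x) := by
    intro k a b
    calc (∑ m, gL x k m * christoffel g gL m a b x)
        = ∑ m, ∑ p, (1/2) * (gL x k m * g x m p) *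
            (pd (fun y => gL y p b) a x + pd (fun y => gL y p a) b x
              - pd (fun y => gL y a b) p x) := by
          refine Finset.sum_congr rfl fun m _ => ?_
          rw [christoffel, Finset.mul_sum, Finset.mul_sum]
          exact Finset.sum_congr rfl fun p _ => by ring
      _ = ∑ p, ∑ m, (1/2) * (gL x k m * g x m p) *
            (pd (fun y => gL y p b) a x + pd (fun y => gL y p a) b x
              - pd (fun y => gL y a b) p x) := Finset.sum_comm
      _ = ∑ p, (1/2) * (∑ m, gL x k m * g x m p) *
            (pd (fun y => gL y p b) a x + pd (fun y => gL y p a) b x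
              - pd (fun y => gL y a b) p x) := by
          refine Finset.sum_congr rfl fun p _ => ?_
          rw [Finset.mul_sum, Finset.sum_mul]
      _ = ∑ p, (if k = p then (1:ℝ) else 0) * ((1/2) *
            (pd (fun y => gL y p b) a x + pd (fun y => gL y p a) b x
              - pd (fun y => gL y a b) p x)) := by
          refine Finset.sum_congr rfl fun p _ => ?_
          rw [hLGd]; ring
      _ = (1/2) * (pd (fun y => gL y k b) a x + pd (fun y => gL y k a) b x
            - pd (fun y => gL y a b) k x) := by
          rw [show (∑ p, (if k = p then (1:ℝ) else 0) * ((1/2) *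
              (pd (fun y => gL y p b) a x + pd (fun y => gL y p a) b x
                - pd (fun y => gL y a b) p x)))
            = ∑ p, (if k = p then (1/2) *
              (pd (fun y => gL y p b) a x + pd (fun y => gL y p a) b x
                - pd (fun y => gL y a b) p x) else 0) from
            Finset.sum_congr rfl fun p _ => by by_cases h : k = p <;> simp [h]]
          simp
  exact key_alg (fun r a b => pd (fun y => gL y a b) r x)
    (fun k a b => christoffel g gL k a b x) (gL x) (Q x) (W x)
    hDsym hlow (hGamQ x hx) hMV i s j
end

section
/- (Lemma 1) Assume g is flat, V^i_j := η^{ik} ∂²h/∂u^k∂u^j = g^{ik}(∂²f/∂u^k∂u^j − Γ^m_{kj} ∂f/∂u^m) on U, and let a, b, p, q, h₀, Q, W, φ, Ū, ḡ, Γ̄ be as in the reciprocal-transformation setup. Then the Christoffel symbols of g in the u-coordinates and of ḡ in the v-coordinates satisfy Γ^k_{ij}(u) = Γ̄^k_{il}(φ(u)) Q^l_j(u) for all u ∈ U and all indices 1 ≤ i, j, k ≤ n. -/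
open scoped BigOperators
open Matrix

section helpers

variable {n : ℕ} {U : Set (Fin n → ℝ)}

lemma pd_congr (hU : IsOpen U) {x : Fin n → ℝ} (hx : x ∈ U) {F G : (Fin n → ℝ) → ℝ}
    (h : ∀ y ∈ U, F y = G y) (i : Fin n) : pd F i x = pd G i x := by
  unfold pd
  rw [Filter.EventuallyEq.fderiv_eq (Filter.eventuallyEq_of_mem (hU.mem_nhds hx) h)]

lemma diffAt (hU : IsOpen U) {x : Fin n → ℝ} (hx : x ∈ U) {F : (Fin n → ℝ) → ℝ}
    (hF : ContDiffOn ℝ (⊤ : ℕ∞) F U) : DifferentiableAt ℝ F x :=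
  ((hF x hx).contDiffAt (hU.mem_nhds hx)).differentiableAt (by simp)

lemma diffAt_congr (hU : IsOpen U) {x : Fin n → ℝ} (hx : x ∈ U) {F G : (Fin n → ℝ) → ℝ}
    (h : ∀ y ∈ U, F y = G y) (hG : DifferentiableAt ℝ G x) : DifferentiableAt ℝ F x := by
  have : F =ᶠ[nhds x] G := Filter.eventuallyEq_of_mem (hU.mem_nhds hx) h
  exact this.differentiableAt_iff.mpr hG

lemma pd_sub {x : Fin n → ℝ} {F G : (Fin n → ℝ) → ℝ} (hF : DifferentiableAt ℝ F x)
    (hG : DifferentiableAt ℝ G x) (i : Fin n) :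
    pd (fun y => F y - G y) i x = pd F i x - pd G i x := by
  unfold pd; rw [fderiv_fun_sub hF hG]; rfl

lemma pd_mul {x : Fin n → ℝ} {F G : (Fin n → ℝ) → ℝ} (hF : DifferentiableAt ℝ F x)
    (hG : DifferentiableAt ℝ G x) (i : Fin n) :
    pd (fun y => F y * G y) i x = pd F i x * G x + F x * pd G i x := by
  unfold pd; rw [fderiv_fun_mul hF hG]; simp [mul_comm]; ring

lemma pd_const_mul {x : Fin n → ℝ} {F : (Fin n → ℝ) → ℝ} (hF : DifferentiableAt ℝ F x)
    (c : ℝ) (i : Fin n) : pd (fun y => c * F y) i x = c * pd F i x := by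
  unfold pd; rw [fderiv_const_mul hF]; rfl

lemma pd_sum {x : Fin n → ℝ} {F : Fin n → (Fin n → ℝ) → ℝ}
    (hF : ∀ s, DifferentiableAt ℝ (F s) x) (i : Fin n) :
    pd (fun y => ∑ s, F s y) i x = ∑ s, pd (F s) i x := by
  unfold pd; rw [fderiv_fun_sum (fun s _ => hF s)]; simp

lemma contDiffOn_pd (hU : IsOpen U) {F : (Fin n → ℝ) → ℝ}
    (hF : ContDiffOn ℝ (⊤ : ℕ∞) F U) (i : Fin n) : ContDiffOn ℝ (⊤ : ℕ∞) (pd F i) U :=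
  (hF.fderiv_of_isOpen hU (by simp)).clm_apply contDiffOn_const

lemma pd_comm (hU : IsOpen U) {x : Fin n → ℝ} (hx : x ∈ U) {F : (Fin n → ℝ) → ℝ}
    (hF : ContDiffOn ℝ (⊤ : ℕ∞) F U) (i j : Fin n) :
    pd (pd F i) j x = pd (pd F j) i x := by
  have hca : ContDiffAt ℝ 2 F x :=
    ((hF x hx).contDiffAt (hU.mem_nhds hx)).of_le (by exact WithTop.coe_le_coe.mpr (le_top : (2 : ℕ∞) ≤ ⊤))
  have hsym := hca.isSymmSndFDerivAt (by simp [minSmoothness_of_isRCLikeNormedField])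
  have hd : DifferentiableAt ℝ (fderiv ℝ F) x :=
    (hca.fderiv_right (m := 1) (by norm_num)).differentiableAt one_ne_zero
  have key : ∀ v w : Fin n → ℝ, fderiv ℝ (fun y => fderiv ℝ F y v) x w
      = fderiv ℝ (fderiv ℝ F) x w v := by
    intro v w
    rw [fderiv_clm_apply hd (differentiableAt_const v)]
    simp
  unfold pd
  rw [key, key, hsym]

/-- third derivative symmetry: swap outermost and innermost directions. -/
lemma pd3_swap (hU : IsOpen U) {x : Fin n → ℝ} (hx : x ∈ U) {F : (Fin n → ℝ) → ℝ}
    (hF : ContDiffOn ℝ (⊤ : ℕ∞) F U) (l k j : Fin n) :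
    pd (pd (pd F j) k) l x = pd (pd (pd F l) k) j x := by
  have h1 : pd (pd (pd F j) k) l x = pd (pd (pd F k) j) l x :=
    pd_congr hU hx (fun y hy => pd_comm hU hy hF j k) l
  have h2 : pd (pd (pd F k) j) l x = pd (pd (pd F k) l) j x :=
    pd_comm hU hx (contDiffOn_pd hU hF k) j l
  have h3 : pd (pd (pd F k) l) j x = pd (pd (pd F l) k) j x :=
    pd_congr hU hx (fun y hy => pd_comm hU hy hF k l) j
  rw [h1, h2, h3]

lemma contDiffOn_christoffel (hU : IsOpen U) {g gL : (Fin n → ℝ) → Matrix (Fin n) (Fin n) ℝ}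
    (hg : ∀ i j, ContDiffOn ℝ (⊤ : ℕ∞) (fun x => g x i j) U)
    (hgL : ∀ i j, ContDiffOn ℝ (⊤ : ℕ∞) (fun x => gL x i j) U)
    (k i j : Fin n) : ContDiffOn ℝ (⊤ : ℕ∞) (christoffel g gL k i j) U := by
  have : christoffel g gL k i j = fun x => (1 / 2) * ∑ s, g x k s *
      (pd (fun y => gL y s j) i x + pd (fun y => gL y s i) j x
        - pd (fun y => gL y i j) s x) := rfl
  rw [this]
  exact contDiffOn_const.mul <| ContDiffOn.sum fun s _ =>
    (hg k s).mul (((contDiffOn_pd hU (hgL s j) i).add (contDiffOn_pd hU (hgL s i) j)).sub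
      (contDiffOn_pd hU (hgL i j) s))

lemma contract_r {A B : Fin n → Fin n → ℝ}
    (hinv : ∀ a b, ∑ s, A a s * B s b = if a = b then (1:ℝ) else 0)
    (T : Fin n → ℝ) (b : Fin n) :
    ∑ s, (∑ a, T a * A a s) * B s b = T b := by
  have : ∑ s, (∑ a, T a * A a s) * B s b = ∑ a, T a * ∑ s, A a s * B s b := by
    simp only [Finset.sum_mul, Finset.mul_sum, mul_assoc]
    exact Finset.sum_comm
  rw [this]
  simp [hinv]

/-- chain rule for pd through a coordinate change -/
lemma pd_chain (hU : IsOpen U) {x : Fin n → ℝ} (hx : x ∈ U)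
    {phi : (Fin n → ℝ) → (Fin n → ℝ)} {Ub : Set (Fin n → ℝ)} (hUb : IsOpen Ub)
    (hphix : phi x ∈ Ub)
    (hphi_d : ∀ i, DifferentiableAt ℝ (fun y => phi y i) x)
    {Fb F : (Fin n → ℝ) → ℝ} (hFb : DifferentiableAt ℝ Fb (phi x))
    (hFF : ∀ y ∈ U, F y = Fb (phi y)) (m : Fin n) :
    pd F m x = ∑ a, pd Fb a (phi x) * pd (fun y => phi y a) m x := by
  have hphiD : DifferentiableAt ℝ phi x := differentiableAt_pi.mpr hphi_d
  have h1 : pd F m x = pd (fun y => Fb (phi y)) m x := by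
    unfold pd
    rw [Filter.EventuallyEq.fderiv_eq (Filter.eventuallyEq_of_mem (hU.mem_nhds hx) hFF)]
  rw [h1]
  unfold pd
  rw [show (fun y => Fb (phi y)) = Fb ∘ phi from rfl, fderiv_comp x hFb hphiD]
  simp only [ContinuousLinearMap.coe_comp', Function.comp_apply]
  -- fderiv phi x (single m 1) = ∑ a, (that vector a) • single a 1
  have hv : ∀ v : Fin n → ℝ, v = ∑ a, v a • (Pi.single a 1 : Fin n → ℝ) := by
    intro v
    ext b
    rw [Finset.sum_apply]
    simp [Pi.single_apply]
  set v := fderiv ℝ phi x (Pi.single m 1) with hvdef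
  have hva : ∀ a, v a = fderiv ℝ (fun y => phi y a) x (Pi.single m 1) := by
    intro a
    rw [hvdef]
    have : phi = fun y b => phi y b := rfl
    rw [this, fderiv_pi hphi_d]
    rfl
  calc fderiv ℝ Fb (phi x) v
      = fderiv ℝ Fb (phi x) (∑ a, v a • (Pi.single a 1 : Fin n → ℝ)) := by rw [← hv v]
    _ = ∑ a, v a * fderiv ℝ Fb (phi x) (Pi.single a 1) := by
        rw [map_sum]
        apply Finset.sum_congr rfl; intro a _
        rw [_root_.map_smul]; rfl
    _ = ∑ a, fderiv ℝ Fb (phi x) (Pi.single a 1) * fderiv ℝ (fun y => phi y a) x (Pi.single m 1) := by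
        apply Finset.sum_congr rfl; intro a _
        rw [hva a]; ring

/-- the matrix fact  G A W = W G A -/
lemma mat_GAW (G L Q W A : Matrix (Fin n) (Fin n) ℝ)
    (hGL : G * L = 1) (hLG : L * G = 1) (hQW : Q * W = 1) (hWQ : W * Q = 1)
    (hLQ : Qᵀ * L = L * Q) (hAQ : A * Q = Qᵀ * A) :
    G * A * W = W * (G * A) := by
  have hQG : Q * G = G * Qᵀ := by
    calc Q * G = G * L * Q * G := by rw [hGL, Matrix.one_mul]
      _ = G * (L * Q) * G := by simp only [Matrix.mul_assoc]
      _ = G * (Qᵀ * L) * G := by rw [hLQ]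
      _ = G * Qᵀ * (L * G) := by rw [Matrix.mul_assoc, Matrix.mul_assoc, Matrix.mul_assoc]
      _ = G * Qᵀ := by rw [hLG, Matrix.mul_one]
  have key : Q * (G * A * W) = Q * (W * (G * A)) := by
    calc Q * (G * A * W) = (Q * G) * A * W := by
          rw [← Matrix.mul_assoc, ← Matrix.mul_assoc]
      _ = G * Qᵀ * A * W := by rw [hQG]
      _ = G * (Qᵀ * A) * W := by rw [Matrix.mul_assoc G]
      _ = G * (A * Q) * W := by rw [hAQ]
      _ = G * A * (Q * W) := by rw [Matrix.mul_assoc, Matrix.mul_assoc, Matrix.mul_assoc]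
      _ = G * A := by rw [hQW, Matrix.mul_one]
      _ = (Q * W) * (G * A) := by rw [hQW, Matrix.one_mul]
      _ = Q * (W * (G * A)) := by rw [Matrix.mul_assoc]
  calc G * A * W = 1 * (G * A * W) := by rw [Matrix.one_mul]
    _ = W * Q * (G * A * W) := by rw [hWQ]
    _ = W * (Q * (G * A * W)) := by rw [Matrix.mul_assoc]
    _ = W * (Q * (W * (G * A))) := by rw [key]
    _ = W * Q * (W * (G * A)) := by rw [Matrix.mul_assoc]
    _ = W * (G * A) := by rw [hWQ, Matrix.one_mul]

/-- W G = G Wᵀ -/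
lemma mat_GW (G L Q W : Matrix (Fin n) (Fin n) ℝ)
    (hGL : G * L = 1) (hLG : L * G = 1) (hQW : Q * W = 1) (hWQ : W * Q = 1)
    (hLQ : Qᵀ * L = L * Q) :
    G * Wᵀ = W * G := by
  have hQG : Q * G = G * Qᵀ := by
    calc Q * G = G * L * Q * G := by rw [hGL, Matrix.one_mul]
      _ = G * (L * Q) * G := by simp only [Matrix.mul_assoc]
      _ = G * (Qᵀ * L) * G := by rw [hLQ]
      _ = G * Qᵀ * (L * G) := by rw [Matrix.mul_assoc, Matrix.mul_assoc, Matrix.mul_assoc]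
      _ = G * Qᵀ := by rw [hLG, Matrix.mul_one]
  have hWQt : Qᵀ * Wᵀ = 1 := by rw [← Matrix.transpose_mul, hWQ, Matrix.transpose_one]
  calc G * Wᵀ = W * Q * (G * Wᵀ) := by rw [hWQ, Matrix.one_mul]
    _ = W * (Q * G) * Wᵀ := by rw [Matrix.mul_assoc, Matrix.mul_assoc, Matrix.mul_assoc]
    _ = W * (G * Qᵀ) * Wᵀ := by rw [hQG]
    _ = W * G * (Qᵀ * Wᵀ) := by rw [Matrix.mul_assoc, Matrix.mul_assoc, Matrix.mul_assoc]
    _ = W * G := by rw [hWQt, Matrix.mul_one]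

end helpers

section algebra

variable {n : ℕ}

/-- metric compatibility written algebraically -/
lemma alg_compat (G L : Fin n → Fin n → ℝ) (c : Fin n → Fin n → Fin n → ℝ)
    (Γ : Fin n → Fin n → Fin n → ℝ)
    (hLs : ∀ a b, L a b = L b a)
    (hLG : ∀ a b, ∑ s, L a s * G s b = if a = b then (1:ℝ) else 0)
    (hcs : ∀ s l m, c s l m = c l s m)
    (hΓ : ∀ k i j, Γ k i j = (1/2) * ∑ s, G k s * (c s j i + c s i j - c i j s)) :
    ∀ s l m, ∑ a, (Γ a m s * L a l + L s a * Γ a m l) = c s l m := by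
  have inner : ∀ (w : Fin n) (P : Fin n → ℝ),
      ∑ a, L w a * ((1/2) * ∑ t, G a t * P t) = (1/2) * P w := by
    intro w P
    have h1 : ∑ a, L w a * ((1/2) * ∑ t, G a t * P t)
        = (1/2) * ∑ t, (∑ a, L w a * G a t) * P t := by
      simp only [Finset.mul_sum, Finset.sum_mul]
      rw [Finset.sum_comm]
      apply Finset.sum_congr rfl; intro t _
      apply Finset.sum_congr rfl; intro a _
      ring
    rw [h1]
    have h2 : ∑ t, (∑ a, L w a * G a t) * P t
        = ∑ t, (if w = t then (1:ℝ) else 0) * P t :=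
      Finset.sum_congr rfl (fun t _ => by rw [hLG])
    rw [h2]; simp
  intro s l m
  rw [Finset.sum_add_distrib]
  have p1 : ∑ a, Γ a m s * L a l = (1/2) * (c l s m + c l m s - c m s l) := by
    have : ∑ a, Γ a m s * L a l
        = ∑ a, L l a * ((1/2) * ∑ t, G a t * (c t s m + c t m s - c m s t)) := by
      apply Finset.sum_congr rfl; intro a _; rw [hΓ a m s, hLs a l]; ring
    rw [this, inner l (fun t => c t s m + c t m s - c m s t)]
  have p2 : ∑ a, L s a * Γ a m l = (1/2) * (c s l m + c s m l - c m l s) := by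
    have : ∑ a, L s a * Γ a m l
        = ∑ a, L s a * ((1/2) * ∑ t, G a t * (c t l m + c t m l - c m l t)) := by
      apply Finset.sum_congr rfl; intro a _; rw [hΓ a m l]
    rw [this, inner s (fun t => c t l m + c t m l - c m l t)]
  rw [p1, p2, hcs l s m, hcs l m s, hcs s m l]
  ring

/-- Ricci-identity cancellation -/
lemma alg_ricci (Γ : Fin n → Fin n → Fin n → ℝ) (fm : Fin n → ℝ)
    (fm2 : Fin n → Fin n → ℝ) (fm3 : Fin n → Fin n → Fin n → ℝ)
    (DΓ : Fin n → Fin n → Fin n → Fin n → ℝ)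
    (Ft : Fin n → Fin n → ℝ)
    (hΓs : ∀ k a b, Γ k a b = Γ k b a)
    (hfm2 : ∀ a b, fm2 a b = fm2 b a)
    (hfm3 : ∀ l k j, fm3 l k j = fm3 j k l)
    (hDΓ : ∀ l m k j, DΓ l m k j - DΓ j m k l
        = ∑ a, Γ m j a * Γ a l k - ∑ a, Γ m l a * Γ a j k)
    (hFt : ∀ k j, Ft k j = fm2 k j - ∑ m, Γ m k j * fm m)
    (l k j : Fin n) :
    (fm3 l k j - ∑ m, DΓ l m k j * fm m - ∑ m, Γ m k j * fm2 l m)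
      - ∑ m, Γ m l k * Ft m j - ∑ m, Γ m l j * Ft k m
    = (fm3 j k l - ∑ m, DΓ j m k l * fm m - ∑ m, Γ m k l * fm2 j m)
      - ∑ m, Γ m j k * Ft m l - ∑ m, Γ m j l * Ft k m := by
  have e1 : fm3 l k j = fm3 j k l := hfm3 l k j
  have e2 : ∑ m, DΓ l m k j * fm m - ∑ m, DΓ j m k l * fm m
      = ∑ m, (∑ a, Γ m j a * Γ a l k) * fm m - ∑ m, (∑ a, Γ m l a * Γ a j k) * fm m := by
    rw [← Finset.sum_sub_distrib, ← Finset.sum_sub_distrib]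
    apply Finset.sum_congr rfl; intro m _
    rw [← sub_mul, ← sub_mul, hDΓ l m k j]
  have e3 : ∑ m, Γ m l k * Ft m j
      = ∑ m, Γ m l k * fm2 m j - ∑ m, ∑ a, Γ m l k * (Γ a m j * fm a) := by
    rw [← Finset.sum_sub_distrib]
    apply Finset.sum_congr rfl; intro m _
    rw [hFt m j, mul_sub, Finset.mul_sum]
  have e4 : ∑ m, Γ m j k * Ft m l
      = ∑ m, Γ m j k * fm2 m l - ∑ m, ∑ a, Γ m j k * (Γ a m l * fm a) := by
    rw [← Finset.sum_sub_distrib]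
    apply Finset.sum_congr rfl; intro m _
    rw [hFt m l, mul_sub, Finset.mul_sum]
  have e5 : ∑ m, Γ m l j * Ft k m = ∑ m, Γ m j l * Ft k m :=
    Finset.sum_congr rfl (fun m _ => by rw [hΓs m l j])
  have c1 : ∑ m, Γ m k j * fm2 l m = ∑ m, Γ m j k * fm2 m l :=
    Finset.sum_congr rfl (fun m _ => by rw [hΓs m k j, hfm2 l m])
  have c2 : ∑ m, Γ m k l * fm2 j m = ∑ m, Γ m l k * fm2 m j :=
    Finset.sum_congr rfl (fun m _ => by rw [hΓs m k l, hfm2 j m])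
  have c3 : ∑ m, ∑ a, Γ m l k * (Γ a m j * fm a)
      = ∑ m, (∑ a, Γ m j a * Γ a l k) * fm m := by
    rw [Finset.sum_comm]
    apply Finset.sum_congr rfl; intro m _
    rw [Finset.sum_mul]
    apply Finset.sum_congr rfl; intro a _
    rw [hΓs m a j]
    ring
  have c4 : ∑ m, ∑ a, Γ m j k * (Γ a m l * fm a)
      = ∑ m, (∑ a, Γ m l a * Γ a j k) * fm m := by
    rw [Finset.sum_comm]
    apply Finset.sum_congr rfl; intro m _
    rw [Finset.sum_mul]
    apply Finset.sum_congr rfl; intro a _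
    rw [hΓs m a l]
    ring
  linarith [e1, e2, e3, e4, e5, c1, c2, c3, c4]

lemma expand_helper (x y : ℝ) (A B : Fin n → Fin n → ℝ) (Wc : Fin n → ℝ) :
    x * (∑ m, (∑ a, (A m a + B m a)) * Wc m) * y
    = (∑ m, ∑ a, x * A m a * Wc m * y) + ∑ m, ∑ a, x * B m a * Wc m * y := by
  calc x * (∑ m, (∑ a, (A m a + B m a)) * Wc m) * y
      = ∑ m, (∑ a, (A m a + B m a)) * (x * Wc m * y) := by
        rw [Finset.mul_sum, Finset.sum_mul]
        apply Finset.sum_congr rfl; intro m _; ring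
    _ = ∑ m, ∑ a, (x * A m a * Wc m * y + x * B m a * Wc m * y) := by
        apply Finset.sum_congr rfl; intro m _
        rw [Finset.sum_mul]; apply Finset.sum_congr rfl; intro a _; ring
    _ = _ := by
        rw [← Finset.sum_add_distrib]
        apply Finset.sum_congr rfl; intro m _
        rw [Finset.sum_add_distrib]


lemma sum_swap12 (f : Fin n → Fin n → ℝ) :
    ∑ a, ∑ b, f a b = ∑ b, ∑ a, f a b := Finset.sum_comm

lemma sum_swap34 (f : Fin n → Fin n → Fin n → Fin n → ℝ) :
    ∑ a, ∑ b, ∑ c, ∑ d, f a b c d = ∑ a, ∑ b, ∑ d, ∑ c, f a b c d :=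
  Finset.sum_congr rfl (fun _ _ => Finset.sum_congr rfl (fun _ _ => Finset.sum_comm))

lemma sum_swap23' (f : Fin n → Fin n → Fin n → Fin n → ℝ) :
    ∑ a, ∑ b, ∑ c, ∑ d, f a b c d = ∑ a, ∑ c, ∑ b, ∑ d, f a b c d :=
  Finset.sum_congr rfl (fun _ _ => Finset.sum_comm)

/-- (l,s,m,a) → (a,l,m,s) -/
lemma sum4_lsma_alms (f : Fin n → Fin n → Fin n → Fin n → ℝ) :
    ∑ l, ∑ s, ∑ m, ∑ a, f l s m a = ∑ a, ∑ l, ∑ m, ∑ s, f l s m a := by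
  calc ∑ l, ∑ s, ∑ m, ∑ a, f l s m a
      = ∑ l, ∑ s, ∑ a, ∑ m, f l s m a := sum_swap34 _
    _ = ∑ l, ∑ a, ∑ s, ∑ m, f l s m a := sum_swap23' _
    _ = ∑ a, ∑ l, ∑ s, ∑ m, f l s m a := sum_swap12 _
    _ = ∑ a, ∑ l, ∑ m, ∑ s, f l s m a := sum_swap34 _

/-- (l,s,m,a) → (s,a,m,l) -/
lemma sum4_lsma_saml (f : Fin n → Fin n → Fin n → Fin n → ℝ) :
    ∑ l, ∑ s, ∑ m, ∑ a, f l s m a = ∑ s, ∑ a, ∑ m, ∑ l, f l s m a := by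
  calc ∑ l, ∑ s, ∑ m, ∑ a, f l s m a
      = ∑ s, ∑ l, ∑ m, ∑ a, f l s m a := sum_swap12 _
    _ = ∑ s, ∑ l, ∑ a, ∑ m, f l s m a := sum_swap34 _
    _ = ∑ s, ∑ a, ∑ l, ∑ m, f l s m a := sum_swap23' _
    _ = ∑ s, ∑ a, ∑ m, ∑ l, f l s m a := sum_swap34 _

lemma factor3 (P : Fin n → ℝ) (R : Fin n → Fin n → ℝ) (Wc : Fin n → ℝ) :
    (∑ l, P l) * (∑ m, (∑ s, R m s) * Wc m) = ∑ l, ∑ m, ∑ s, P l * R m s * Wc m := by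
  rw [Finset.sum_mul]
  apply Finset.sum_congr rfl; intro l _
  rw [Finset.mul_sum]
  apply Finset.sum_congr rfl; intro m _
  rw [Finset.sum_mul, Finset.mul_sum]
  apply Finset.sum_congr rfl; intro s _
  ring

lemma factor3' (P : Fin n → ℝ) (Y : Fin n → ℝ) (Z : Fin n → Fin n → ℝ) :
    (∑ l, P l) * (∑ m, Y m * (∑ s, Z m s)) = ∑ l, ∑ m, ∑ s, P l * Y m * Z m s := by
  rw [Finset.sum_mul]
  apply Finset.sum_congr rfl; intro l _
  rw [Finset.mul_sum]
  apply Finset.sum_congr rfl; intro m _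
  rw [Finset.mul_sum, Finset.mul_sum]
  apply Finset.sum_congr rfl; intro s _
  ring

lemma key_alg_s4 (G L Q W : Fin n → Fin n → ℝ) (Γ : Fin n → Fin n → Fin n → ℝ)
    (cb : Fin n → Fin n → Fin n → ℝ)
    (hGs : ∀ a b, G a b = G b a)
    (hLs : ∀ a b, L a b = L b a)
    (hGL : ∀ a b, ∑ s, G a s * L s b = if a = b then (1:ℝ) else 0)
    (hQW : ∀ a b, ∑ s, Q a s * W s b = if a = b then (1:ℝ) else 0)
    (hWQ : ∀ a b, ∑ s, W a s * Q s b = if a = b then (1:ℝ) else 0)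
    (hGW : ∀ k m, ∑ s, G k s * W m s = ∑ s, G m s * W k s)
    (hΓs : ∀ k a b, Γ k a b = Γ k b a)
    (hC : ∀ i k j, ∑ m, Γ i k m * Q m j = ∑ m, Γ i j m * Q m k)
    (hGAW : ∀ a k i, ∑ m, (∑ s, G k s * Γ a s m) * W m i
        = ∑ m, W k m * (∑ s, G m s * Γ a s i))
    (hcb : ∀ s l i, cb s l i
        = ∑ m, (∑ a, (Γ a m s * L a l + L s a * Γ a m l)) * W m i)
    (k i j : Fin n) :
    Γ k i j = ∑ l, ((1/2) * ∑ s, G k s * (cb s l i + cb s i l - cb i l s)) * Q l j := by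
  -- common expression
  set E := ∑ a, (∑ l, L a l * Q l j) * (∑ m, W k m * (∑ s, G m s * Γ a s i)) with hE
  set S' := ∑ s, ∑ a, G k s * (Γ a j s * L a i) with hS'
  -- == TM ==
  have hMid : ∑ l, ∑ s, G k s * cb s i l * Q l j = S' + Γ k j i := by
    have h1 : ∑ l, ∑ s, G k s * cb s i l * Q l j
        = ∑ s, G k s * (∑ a, (Γ a j s * L a i + L s a * Γ a j i)) := by
      rw [Finset.sum_comm]
      apply Finset.sum_congr rfl; intro s _
      have h2 : ∑ l, G k s * cb s i l * Q l j = G k s * ∑ l, cb s i l * Q l j := by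
        rw [Finset.mul_sum]; apply Finset.sum_congr rfl; intro l _; ring
      rw [h2]
      congr 1
      rw [Finset.sum_congr rfl (fun l _ => by rw [hcb s i l])]
      exact contract_r hWQ (fun m => ∑ a, (Γ a m s * L a i + L s a * Γ a m i)) j
    rw [h1]
    have h4 : ∑ s, G k s * (∑ a, (Γ a j s * L a i + L s a * Γ a j i))
        = (∑ s, ∑ a, G k s * (Γ a j s * L a i)) + ∑ s, ∑ a, G k s * (L s a * Γ a j i) := by
      simp only [Finset.mul_sum, mul_add, Finset.sum_add_distrib]
    rw [h4, hS']
    congr 1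
    have h5 : ∑ s, ∑ a, G k s * (L s a * Γ a j i) = ∑ a, (∑ s, G k s * L s a) * Γ a j i := by
      rw [Finset.sum_comm]; apply Finset.sum_congr rfl; intro a _
      rw [Finset.sum_mul]; apply Finset.sum_congr rfl; intro s _; ring
    rw [h5]; simp [hGL]
  -- == TI ==
  have hTIsplit : ∑ l, ∑ s, G k s * cb s l i * Q l j
      = (∑ l, ∑ s, ∑ m, ∑ a, G k s * (Γ a m s * L a l) * W m i * Q l j)
        + ∑ l, ∑ s, ∑ m, ∑ a, G k s * (L s a * Γ a m l) * W m i * Q l j := by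
    rw [← Finset.sum_add_distrib]
    apply Finset.sum_congr rfl; intro l _
    rw [← Finset.sum_add_distrib]
    apply Finset.sum_congr rfl; intro s _
    rw [hcb s l i]
    exact expand_helper (G k s) (Q l j) (fun m a => Γ a m s * L a l)
      (fun m a => L s a * Γ a m l) (fun m => W m i)
  have hTIb : ∑ l, ∑ s, ∑ m, ∑ a, G k s * (L s a * Γ a m l) * W m i * Q l j
      = Γ k j i := by
    have h6 : ∑ l, ∑ s, ∑ m, ∑ a, G k s * (L s a * Γ a m l) * W m i * Q l j
        = ∑ l, ∑ m, Γ k m l * W m i * Q l j := by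
      apply Finset.sum_congr rfl; intro l _
      have : ∑ s, ∑ m, ∑ a, G k s * (L s a * Γ a m l) * W m i * Q l j
          = ∑ m, ∑ a, (∑ s, G k s * L s a) * (Γ a m l * W m i * Q l j) := by
        rw [Finset.sum_comm]
        apply Finset.sum_congr rfl; intro m _
        rw [Finset.sum_comm]
        apply Finset.sum_congr rfl; intro a _
        rw [Finset.sum_mul]; apply Finset.sum_congr rfl; intro s _; ring
      rw [this]
      apply Finset.sum_congr rfl; intro m _
      simp [hGL, mul_assoc]
    rw [h6]
    have h7 : ∑ l, ∑ m, Γ k m l * W m i * Q l j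
        = ∑ m, (∑ l, Γ k m l * Q l j) * W m i := by
      rw [Finset.sum_comm]
      simp only [Finset.sum_mul]
      apply Finset.sum_congr rfl; intro m _
      apply Finset.sum_congr rfl; intro l _
      ring
    rw [h7, Finset.sum_congr rfl (fun m _ => by rw [hC k m j])]
    exact contract_r hQW (fun l => Γ k j l) i
  have hTIa : ∑ l, ∑ s, ∑ m, ∑ a, G k s * (Γ a m s * L a l) * W m i * Q l j = E := by
    rw [sum4_lsma_alms (fun l s m a => G k s * (Γ a m s * L a l) * W m i * Q l j), hE]
    apply Finset.sum_congr rfl; intro a _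
    rw [← hGAW a k i,
      factor3 (fun l => L a l * Q l j) (fun m s => G k s * Γ a s m) (fun m => W m i)]
    apply Finset.sum_congr rfl; intro l _
    apply Finset.sum_congr rfl; intro m _
    apply Finset.sum_congr rfl; intro s _
    rw [hΓs a m s]; ring
  -- == TIII ==
  have hTIIIsplit : ∑ l, ∑ s, G k s * cb i l s * Q l j
      = (∑ l, ∑ s, ∑ m, ∑ a, G k s * (Γ a m i * L a l) * W m s * Q l j)
        + ∑ l, ∑ s, ∑ m, ∑ a, G k s * (L i a * Γ a m l) * W m s * Q l j := by
    rw [← Finset.sum_add_distrib]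
    apply Finset.sum_congr rfl; intro l _
    rw [← Finset.sum_add_distrib]
    apply Finset.sum_congr rfl; intro s _
    rw [hcb i l s]
    exact expand_helper (G k s) (Q l j) (fun m a => Γ a m i * L a l)
      (fun m a => L i a * Γ a m l) (fun m => W m s)
  have hTIIIa : ∑ l, ∑ s, ∑ m, ∑ a, G k s * (Γ a m i * L a l) * W m s * Q l j = E := by
    rw [sum4_lsma_alms (fun l s m a => G k s * (Γ a m i * L a l) * W m s * Q l j), hE]
    apply Finset.sum_congr rfl; intro a _
    rw [factor3' (fun l => L a l * Q l j) (fun m => W k m) (fun m s => G m s * Γ a s i)]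
    apply Finset.sum_congr rfl; intro l _
    have lhs1 : ∑ m, ∑ s, G k s * (Γ a m i * L a l) * W m s * Q l j
        = ∑ m, (Γ a m i * (L a l * Q l j)) * (∑ s, G k s * W m s) := by
      apply Finset.sum_congr rfl; intro m _
      rw [Finset.mul_sum]
      apply Finset.sum_congr rfl; intro s _
      ring
    rw [lhs1, Finset.sum_congr rfl (fun m _ => by rw [hGW k m])]
    have lhs2 : ∑ m, (Γ a m i * (L a l * Q l j)) * (∑ s, G m s * W k s)
        = ∑ m, ∑ s, (Γ a m i * (L a l * Q l j)) * (G m s * W k s) := by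
      apply Finset.sum_congr rfl; intro m _
      rw [Finset.mul_sum]
    rw [lhs2, Finset.sum_comm]
    apply Finset.sum_congr rfl; intro m _
    apply Finset.sum_congr rfl; intro s _
    rw [hGs s m]; ring
  have hTIIIb : ∑ l, ∑ s, ∑ m, ∑ a, G k s * (L i a * Γ a m l) * W m s * Q l j
      = ∑ s, ∑ a, G k s * (L i a * Γ a j s) := by
    rw [sum4_lsma_saml (fun l s m a => G k s * (L i a * Γ a m l) * W m s * Q l j)]
    apply Finset.sum_congr rfl; intro s _
    apply Finset.sum_congr rfl; intro a _
    have h8 : ∑ m, ∑ l, G k s * (L i a * Γ a m l) * W m s * Q l j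
        = G k s * L i a * ∑ m, (∑ l, Γ a m l * Q l j) * W m s := by
      simp only [Finset.mul_sum, Finset.sum_mul]
      apply Finset.sum_congr rfl; intro m _
      apply Finset.sum_congr rfl; intro l _
      ring
    rw [h8, Finset.sum_congr rfl (fun m _ => by rw [hC a m j]),
      contract_r hQW (fun l => Γ a j l) s]
    ring
  have hSS : ∑ s, ∑ a, G k s * (L i a * Γ a j s) = S' := by
    rw [hS']
    apply Finset.sum_congr rfl; intro s _
    apply Finset.sum_congr rfl; intro a _
    rw [hLs i a]; ring
  -- == assembly ==
  have hsplit : ∑ l, ((1/2) * ∑ s, G k s * (cb s l i + cb s i l - cb i l s)) * Q l j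
      = (1/2) * ((∑ l, ∑ s, G k s * cb s l i * Q l j)
          + (∑ l, ∑ s, G k s * cb s i l * Q l j)
          - ∑ l, ∑ s, G k s * cb i l s * Q l j) := by
    have per_l : ∀ l, ((1/2) * ∑ s, G k s * (cb s l i + cb s i l - cb i l s)) * Q l j
        = (1/2) * ((∑ s, G k s * cb s l i * Q l j) + (∑ s, G k s * cb s i l * Q l j)
            - ∑ s, G k s * cb i l s * Q l j) := by
      intro l
      have hd : ∑ s, G k s * (cb s l i + cb s i l - cb i l s)
          = (∑ s, G k s * cb s l i) + (∑ s, G k s * cb s i l)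
            - ∑ s, G k s * cb i l s := by
        simp only [mul_add, mul_sub, Finset.sum_add_distrib, Finset.sum_sub_distrib]
      rw [hd, ← Finset.sum_mul, ← Finset.sum_mul, ← Finset.sum_mul]
      ring
    rw [Finset.sum_congr rfl (fun l _ => per_l l)]
    rw [← Finset.mul_sum, Finset.sum_sub_distrib, Finset.sum_add_distrib]
  rw [hsplit, hTIsplit, hTIa, hTIb, hMid, hTIIIsplit, hTIIIa, hTIIIb, hSS,
    hΓs k i j]
  ring


lemma contract_m {A B : Fin n → Fin n → ℝ}
    (hinv : ∀ a b, ∑ s, A a s * B s b = if a = b then (1:ℝ) else 0)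
    (T : Fin n → ℝ) (b0 : Fin n) :
    ∑ k, A b0 k * (∑ b, B k b * T b) = T b0 := by
  have h1 : ∑ k, A b0 k * (∑ b, B k b * T b) = ∑ b, (∑ k, A b0 k * B k b) * T b := by
    simp only [Finset.mul_sum, Finset.sum_mul, mul_assoc]
    exact Finset.sum_comm
  rw [h1]
  have h2 : ∑ b, (∑ k, A b0 k * B k b) * T b
      = ∑ b, (if b0 = b then (1:ℝ) else 0) * T b :=
    Finset.sum_congr rfl (fun b _ => by rw [hinv])
  rw [h2]; simp

lemma alg_low (G L : Fin n → Fin n → ℝ) (Γ : Fin n → Fin n → Fin n → ℝ)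
    (Vt Ft : Fin n → Fin n → ℝ) (DV DF : Fin n → Fin n → Fin n → ℝ)
    (hGL : ∀ a b, ∑ s, G a s * L s b = if a = b then (1:ℝ) else 0)
    (hΓs : ∀ k a b, Γ k a b = Γ k b a)
    (hDFlow : ∀ l k j, DF l k j
        = ∑ a, ((∑ b, (Γ b l k * L b a + L k b * Γ b l a)) * Vt a j + L k a * DV l a j))
    (hFtlow : ∀ k j, Ft k j = ∑ a, L k a * Vt a j)
    (hDVs : ∀ l a j, DV l a j = DV j a l)
    (hTsym : ∀ l k j, DF l k j - (∑ m, Γ m l k * Ft m j) - (∑ m, Γ m l j * Ft k m)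
        = DF j k l - (∑ m, Γ m j k * Ft m l) - (∑ m, Γ m j l * Ft k m))
    (b0 l j : Fin n) :
    ∑ a, Γ b0 l a * Vt a j = ∑ a, Γ b0 j a * Vt a l := by
  have e1 : ∀ l' j' k, DF l' k j'
      = (∑ a, (∑ b, Γ b l' k * L b a) * Vt a j')
        + (∑ b, L k b * (∑ a, Γ b l' a * Vt a j'))
        + ∑ a, L k a * DV l' a j' := by
    intro l' j' k
    rw [hDFlow l' k j']
    rw [Finset.sum_add_distrib]
    congr 1
    have : ∀ a, (∑ b, (Γ b l' k * L b a + L k b * Γ b l' a)) * Vt a j'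
        = (∑ b, Γ b l' k * L b a) * Vt a j' + (∑ b, L k b * Γ b l' a) * Vt a j' := by
      intro a
      rw [Finset.sum_add_distrib, add_mul]
    rw [Finset.sum_congr rfl (fun a _ => this a), Finset.sum_add_distrib]
    congr 1
    -- ∑ a (∑ b L k b * Γ b l' a) * Vt a j' = ∑ b L k b * (∑ a Γ b l' a * Vt a j')
    simp only [Finset.sum_mul, Finset.mul_sum, mul_assoc]
    exact Finset.sum_comm
  have e2 : ∀ l' j' k, ∑ m, Γ m l' k * Ft m j'
      = ∑ a, (∑ b, Γ b l' k * L b a) * Vt a j' := by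
    intro l' j' k
    rw [Finset.sum_congr rfl (fun m _ => by rw [hFtlow m j'])]
    simp only [Finset.sum_mul, Finset.mul_sum, mul_assoc]
    exact Finset.sum_comm
  have e3 : ∀ l' j' k, ∑ m, Γ m l' j' * Ft k m = ∑ m, Γ m j' l' * Ft k m := by
    intro l' j' k
    exact Finset.sum_congr rfl (fun m _ => by rw [hΓs m l' j'])
  have hk : ∀ k, ∑ b, L k b * (∑ a, Γ b l a * Vt a j)
      = ∑ b, L k b * (∑ a, Γ b j a * Vt a l) := by
    intro k
    have ht := hTsym l k j
    rw [e1 l j k, e1 j l k, e2 l j k, e2 j l k, e3 l j k] at ht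
    have hdv : ∑ a, L k a * DV l a j = ∑ a, L k a * DV j a l :=
      Finset.sum_congr rfl (fun a _ => by rw [hDVs l a j])
    rw [hdv] at ht
    linarith [ht]
  have hX : ∑ a, Γ b0 l a * Vt a j
      = ∑ k, G b0 k * (∑ b, L k b * (∑ a, Γ b l a * Vt a j)) :=
    (contract_m hGL (fun b => ∑ a, Γ b l a * Vt a j) b0).symm
  rw [hX, Finset.sum_congr rfl (fun k _ => by rw [hk k])]
  exact contract_m hGL (fun b => ∑ a, Γ b j a * Vt a l) b0

end algebra

theorem stmt_4
    (n : ℕ) (hn : 1 ≤ n)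
    (U : Set (Fin n → ℝ)) (hU_open : IsOpen U) (hU_conn : IsConnected U)
    (hU_sc : SimplyConnectedSpace U)
    (eta etaL : Matrix (Fin n) (Fin n) ℝ)
    (heta_symm : eta.IsSymm) (heta_inv : eta * etaL = 1)
    (g gL : (Fin n → ℝ) → Matrix (Fin n) (Fin n) ℝ)
    (hg_smooth : ∀ i j, ContDiffOn ℝ (⊤ : ℕ∞) (fun x => g x i j) U)
    (hgL_smooth : ∀ i j, ContDiffOn ℝ (⊤ : ℕ∞) (fun x => gL x i j) U)
    (hg_symm : ∀ x ∈ U, (g x).IsSymm)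
    (hg_inv : ∀ x ∈ U, g x * gL x = 1)
    (hg_flat : ∀ x ∈ U, ∀ i j k s, curvature g gL i j k s x = 0)
    (h f : (Fin n → ℝ) → ℝ) (hh : ContDiffOn ℝ (⊤ : ℕ∞) h U) (hf : ContDiffOn ℝ (⊤ : ℕ∞) f U)
    (V : (Fin n → ℝ) → Matrix (Fin n) (Fin n) ℝ)
    (hVh : ∀ x ∈ U, ∀ i j, V x i j = ∑ k, eta i k * pd (pd h j) k x)
    (hVf : ∀ x ∈ U, ∀ i j, V x i j =
      ∑ k, g x i k * (pd (pd f j) k x - ∑ m, christoffel g gL m k j x * pd f m x))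
    (a b p q : ℝ) (habpq : a * q - b * p ≠ 0)
    (Q W : (Fin n → ℝ) → Matrix (Fin n) (Fin n) ℝ)
    (hQ : ∀ x ∈ U, Q x = q • (1 : Matrix (Fin n) (Fin n) ℝ) - p • V x)
    (hQW : ∀ x ∈ U, Q x * W x = 1 ∧ W x * Q x = 1)
    (phi psi : (Fin n → ℝ) → (Fin n → ℝ))
    (hphi : ∀ x ∈ U, ∀ i, phi x i = q * x i - p * ∑ k, eta i k * pd h k x)
    (hphi_smooth : ∀ i, ContDiffOn ℝ (⊤ : ℕ∞) (fun x => phi x i) U)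
    (hphi_inj : Set.InjOn phi U)
    (hUb_open : IsOpen (phi '' U))
    (hpsi : ∀ x ∈ U, psi (phi x) = x)
    (hpsi_smooth : ∀ i, ContDiffOn ℝ (⊤ : ℕ∞) (fun v => psi v i) (phi '' U))
    (hJac : ∀ x ∈ U, ∀ i j, pd (fun y => phi y i) j x = Q x i j)
    (gb gbL : (Fin n → ℝ) → Matrix (Fin n) (Fin n) ℝ)
    (hgb : ∀ x ∈ U, gb (phi x) = g x)
    (hgbL : ∀ x ∈ U, gbL (phi x) = gL x)
    (hgb_smooth : ∀ i j, ContDiffOn ℝ (⊤ : ℕ∞) (fun v => gb v i j) (phi '' U))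
    (hgbL_smooth : ∀ i j, ContDiffOn ℝ (⊤ : ℕ∞) (fun v => gbL v i j) (phi '' U))
    :
    ∀ x ∈ U, ∀ i j k,
      christoffel g gL k i j x = ∑ l, christoffel gb gbL k i l (phi x) * Q x l j := by
  intro x hx i j k
  -- ===== basic pointwise facts =====
  have hgs : ∀ y ∈ U, ∀ a b, g y a b = g y b a := by
    intro y hy a b
    exact (hg_symm y hy).apply b a
  have hgLg : ∀ y ∈ U, gL y * g y = 1 := fun y hy => mul_eq_one_comm.mp (hg_inv y hy)
  have hgLsM : ∀ y ∈ U, (gL y)ᵀ = gL y := by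
    intro y hy
    have h1 : (gL y)ᵀ * g y = 1 := by
      have h0 := congrArg Matrix.transpose (hg_inv y hy)
      rw [Matrix.transpose_mul, Matrix.transpose_one] at h0
      rwa [hg_symm y hy] at h0
    calc (gL y)ᵀ = (gL y)ᵀ * 1 := by rw [Matrix.mul_one]
      _ = (gL y)ᵀ * (g y * gL y) := by rw [hg_inv y hy]
      _ = ((gL y)ᵀ * g y) * gL y := by rw [Matrix.mul_assoc]
      _ = gL y := by rw [h1, Matrix.one_mul]
  have hgLs : ∀ y ∈ U, ∀ a b, gL y a b = gL y b a := by
    intro y hy a b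
    conv_lhs => rw [← hgLsM y hy]
    rw [Matrix.transpose_apply]
  have hGLe : ∀ y ∈ U, ∀ a b, ∑ s, g y a s * gL y s b = if a = b then (1:ℝ) else 0 := by
    intro y hy a b
    have h0 := congrFun (congrFun (hg_inv y hy) a) b
    simpa [Matrix.mul_apply, Matrix.one_apply] using h0
  have hLGe : ∀ y ∈ U, ∀ a b, ∑ s, gL y a s * g y s b = if a = b then (1:ℝ) else 0 := by
    intro y hy a b
    have h0 := congrFun (congrFun (hgLg y hy) a) b
    simpa [Matrix.mul_apply, Matrix.one_apply] using h0
  -- ===== christoffel symmetry and smoothness =====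
  have hcsym : ∀ y ∈ U, ∀ s l m, pd (fun z => gL z s l) m y = pd (fun z => gL z l s) m y :=
    fun y hy s l m => pd_congr hU_open hy (fun z hz => hgLs z hz s l) m
  have hΓsym : ∀ y ∈ U, ∀ a b c, christoffel g gL a b c y = christoffel g gL a c b y := by
    intro y hy a b c
    unfold christoffel
    congr 1
    apply Finset.sum_congr rfl; intro s _
    rw [hcsym y hy b c s]
    ring
  have hΓsm : ∀ a b c, ContDiffOn ℝ (⊤ : ℕ∞) (christoffel g gL a b c) U :=
    fun a b c => contDiffOn_christoffel hU_open hg_smooth hgL_smooth a b c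
  have hΓd : ∀ y ∈ U, ∀ a b c, DifferentiableAt ℝ (christoffel g gL a b c) y :=
    fun y hy a b c => diffAt hU_open hy (hΓsm a b c)
  -- ===== metric compatibility =====
  have hcompat : ∀ y ∈ U, ∀ s l m, pd (fun z => gL z s l) m y
      = ∑ a, (christoffel g gL a m s y * gL y a l + gL y s a * christoffel g gL a m l y) := by
    intro y hy s l m
    exact (alg_compat (fun a b => g y a b) (fun a b => gL y a b)
      (fun s l m => pd (fun z => gL z s l) m y)
      (fun k i j => christoffel g gL k i j y)
      (fun a b => hgLs y hy a b) (fun a b => hLGe y hy a b)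
      (fun s l m => hcsym y hy s l m)
      (fun k i j => rfl) s l m).symm
  -- ===== V facts (h-side) =====
  have hVd : ∀ y ∈ U, ∀ a b, DifferentiableAt ℝ (fun z => V z a b) y := by
    intro y hy a b
    exact diffAt_congr hU_open hy (fun z hz => hVh z hz a b)
      (diffAt hU_open hy (ContDiffOn.sum fun k' _ =>
        contDiffOn_const.mul (contDiffOn_pd hU_open (contDiffOn_pd hU_open hh b) k')))
  have hDVh : ∀ l a b, pd (fun z => V z a b) l x
      = ∑ k', eta a k' * pd (pd (pd h b) k') l x := by
    intro l a b
    rw [pd_congr hU_open hx (fun z hz => hVh z hz a b) l,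
      pd_sum (fun k' => (differentiableAt_const _).fun_mul
        (diffAt hU_open hx (contDiffOn_pd hU_open (contDiffOn_pd hU_open hh b) k'))) l]
    apply Finset.sum_congr rfl; intro k' _
    exact pd_const_mul
      (diffAt hU_open hx (contDiffOn_pd hU_open (contDiffOn_pd hU_open hh b) k')) _ l
  have hE1 : ∀ l a b, pd (fun z => V z a b) l x = pd (fun z => V z a l) b x := by
    intro l a b
    rw [hDVh l a b, hDVh b a l]
    apply Finset.sum_congr rfl; intro k' _
    rw [pd3_swap hU_open hx hh l k' b]
  -- ===== f-side =====
  set Ff := fun (k' j' : Fin n) => fun y =>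
    pd (pd f j') k' y - ∑ m, christoffel g gL m k' j' y * pd f m y with hFfdef
  have hVFf : ∀ y ∈ U, ∀ a b, V y a b = ∑ k', g y a k' * Ff k' b y := fun y hy a b =>
    hVf y hy a b
  have hLV : ∀ y ∈ U, ∀ k' j', Ff k' j' y = ∑ a, gL y k' a * V y a j' := by
    intro y hy k' j'
    have h1 : ∑ a, gL y k' a * V y a j' = ∑ a, gL y k' a * (∑ t, g y a t * Ff t j' y) :=
      Finset.sum_congr rfl (fun a _ => by rw [hVFf y hy a j'])
    rw [h1, contract_m (hLGe y hy) (fun t => Ff t j' y) k']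
  have hDF' : ∀ l k' j', pd (Ff k' j') l x
      = pd (pd (pd f j') k') l x - (∑ m, pd (christoffel g gL m k' j') l x * pd f m x)
        - ∑ m, christoffel g gL m k' j' x * pd (pd f m) l x := by
    intro l k' j'
    have hd1 : DifferentiableAt ℝ (pd (pd f j') k') x :=
      diffAt hU_open hx (contDiffOn_pd hU_open (contDiffOn_pd hU_open hf j') k')
    have hd2 : DifferentiableAt ℝ (fun y => ∑ m, christoffel g gL m k' j' y * pd f m y) x := by
      apply DifferentiableAt.fun_sum
      intro m _
      exact (hΓd x hx m k' j').mul (diffAt hU_open hx (contDiffOn_pd hU_open hf m))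
    have e0 : pd (Ff k' j') l x = pd (pd (pd f j') k') l x
        - pd (fun y => ∑ m, christoffel g gL m k' j' y * pd f m y) l x :=
      pd_sub hd1 hd2 l
    rw [e0, pd_sum (fun m => (hΓd x hx m k' j').fun_mul
      (diffAt hU_open hx (contDiffOn_pd hU_open hf m))) l]
    have e1 : ∀ m, pd (fun y => christoffel g gL m k' j' y * pd f m y) l x
        = pd (christoffel g gL m k' j') l x * pd f m x
          + christoffel g gL m k' j' x * pd (pd f m) l x :=
      fun m => pd_mul (hΓd x hx m k' j') (diffAt hU_open hx (contDiffOn_pd hU_open hf m)) l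
    rw [Finset.sum_congr rfl (fun m _ => e1 m), Finset.sum_add_distrib]
    ring
  have hDFlow : ∀ l k' j', pd (Ff k' j') l x
      = ∑ a, ((∑ b, (christoffel g gL b l k' x * gL x b a + gL x k' b * christoffel g gL b l a x))
          * V x a j' + gL x k' a * pd (fun z => V z a j') l x) := by
    intro l k' j'
    rw [pd_congr hU_open hx (fun y hy => hLV y hy k' j') l,
      pd_sum (fun a => (diffAt hU_open hx (hgL_smooth k' a)).fun_mul (hVd x hx a j')) l]
    apply Finset.sum_congr rfl; intro a _
    rw [pd_mul (diffAt hU_open hx (hgL_smooth k' a)) (hVd x hx a j') l,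
      hcompat x hx k' a l]
  have hfm2s : ∀ a b, pd (pd f b) a x = pd (pd f a) b x := fun a b =>
    pd_comm hU_open hx hf b a
  have hDΓ : ∀ l m k' j', pd (christoffel g gL m k' j') l x
        - pd (christoffel g gL m k' l) j' x
      = ∑ a, christoffel g gL m j' a x * christoffel g gL a l k' x
        - ∑ a, christoffel g gL m l a x * christoffel g gL a j' k' x := by
    intro l m k' j'
    have h1 : pd (christoffel g gL m k' j') l x = pd (christoffel g gL m j' k') l x :=
      pd_congr hU_open hx (fun y hy => hΓsym y hy m k' j') l
    have h2 : pd (christoffel g gL m k' l) j' x = pd (christoffel g gL m l k') j' x :=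
      pd_congr hU_open hx (fun y hy => hΓsym y hy m k' l) j'
    have h3 := hg_flat x hx l j' k' m
    unfold curvature at h3
    rw [h1, h2]
    linarith [h3]
  have hTsym : ∀ l k' j', pd (Ff k' j') l x
        - (∑ m, christoffel g gL m l k' x * Ff m j' x)
        - (∑ m, christoffel g gL m l j' x * Ff k' m x)
      = pd (Ff k' l) j' x - (∑ m, christoffel g gL m j' k' x * Ff m l x)
        - (∑ m, christoffel g gL m j' l x * Ff k' m x) := by
    intro l k' j'
    rw [hDF' l k' j', hDF' j' k' l]
    exact alg_ricci (fun a b c => christoffel g gL a b c x) (fun m => pd f m x)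
      (fun a b => pd (pd f b) a x) (fun l' k'' j'' => pd (pd (pd f j'') k'') l' x)
      (fun l' m k'' j'' => pd (christoffel g gL m k'' j'') l' x)
      (fun a b => Ff a b x)
      (fun a b c => hΓsym x hx a b c) hfm2s
      (fun l' k'' j'' => pd3_swap hU_open hx hf l' k'' j'')
      (fun l' m k'' j'' => hDΓ l' m k'' j'')
      (fun k'' j'' => rfl)
      l k' j'
  have hCV : ∀ b l0 j0, ∑ a, christoffel g gL b l0 a x * V x a j0
      = ∑ a, christoffel g gL b j0 a x * V x a l0 := by
    intro b l0 j0
    exact alg_low (fun a b => g x a b) (fun a b => gL x a b)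
      (fun a b c => christoffel g gL a b c x)
      (fun a b => V x a b) (fun a b => Ff a b x)
      (fun l' a b => pd (fun z => V z a b) l' x)
      (fun l' k'' j'' => pd (Ff k'' j'') l' x)
      (fun a b => hGLe x hx a b)
      (fun a b c => hΓsym x hx a b c)
      hDFlow (fun k'' j'' => hLV x hx k'' j'')
      hE1 hTsym b l0 j0
  -- ===== Q-based symmetries =====
  have hQe : ∀ a b, Q x a b = q * (if a = b then (1:ℝ) else 0) - p * V x a b := by
    intro a b
    rw [hQ x hx]
    simp [Matrix.sub_apply, Matrix.smul_apply, Matrix.one_apply, smul_eq_mul]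
  have hCq : ∀ i0 k0 j0, ∑ m, christoffel g gL i0 k0 m x * Q x m j0
      = ∑ m, christoffel g gL i0 j0 m x * Q x m k0 := by
    have e : ∀ (i0 k0 j0 : Fin n), ∑ m, christoffel g gL i0 k0 m x * Q x m j0
        = q * christoffel g gL i0 k0 j0 x
          - p * ∑ m, christoffel g gL i0 k0 m x * V x m j0 := by
      intro i0 k0 j0
      rw [Finset.sum_congr rfl (fun m _ => by rw [hQe m j0])]
      have e2 : ∀ m, christoffel g gL i0 k0 m x
            * (q * (if m = j0 then (1:ℝ) else 0) - p * V x m j0)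
          = q * (christoffel g gL i0 k0 m x * (if m = j0 then (1:ℝ) else 0))
            - p * (christoffel g gL i0 k0 m x * V x m j0) := fun m => by ring
      rw [Finset.sum_congr rfl (fun m _ => e2 m), Finset.sum_sub_distrib,
        ← Finset.mul_sum, ← Finset.mul_sum]
      congr 2
      simp
    intro i0 k0 j0
    rw [e i0 k0 j0, e i0 j0 k0, hCV i0 k0 j0, hΓsym x hx i0 k0 j0]
  have hFts : ∀ a b, Ff a b x = Ff b a x := by
    intro a b
    show pd (pd f b) a x - ∑ m, christoffel g gL m a b x * pd f m x
      = pd (pd f a) b x - ∑ m, christoffel g gL m b a x * pd f m x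
    rw [hfm2s a b, Finset.sum_congr rfl (fun m _ => by rw [hΓsym x hx m a b])]
  have hBq : ∀ a b, ∑ s, gL x a s * Q x s b = ∑ s, gL x b s * Q x s a := by
    have e : ∀ (a b : Fin n), ∑ s, gL x a s * Q x s b = q * gL x a b - p * Ff a b x := by
      intro a b
      rw [Finset.sum_congr rfl (fun s _ => by rw [hQe s b])]
      have e2 : ∀ s, gL x a s * (q * (if s = b then (1:ℝ) else 0) - p * V x s b)
          = q * (gL x a s * (if s = b then (1:ℝ) else 0)) - p * (gL x a s * V x s b) :=
        fun s => by ring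
      rw [Finset.sum_congr rfl (fun s _ => e2 s), Finset.sum_sub_distrib,
        ← Finset.mul_sum, ← Finset.mul_sum, hLV x hx a b]
      congr 2
      simp
    intro a b
    rw [e a b, e b a, hgLs x hx a b, hFts a b]
  -- ===== matrix-level facts =====
  have hQWm := (hQW x hx).1
  have hWQm := (hQW x hx).2
  have hgm : g x * gL x = 1 := hg_inv x hx
  have hLGm : gL x * g x = 1 := hgLg x hx
  have hLQmat : (Q x)ᵀ * gL x = gL x * Q x := by
    ext a b
    rw [Matrix.mul_apply, Matrix.mul_apply]
    calc ∑ s, (Q x)ᵀ a s * gL x s b = ∑ s, gL x b s * Q x s a := by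
          apply Finset.sum_congr rfl; intro s _
          rw [Matrix.transpose_apply, hgLs x hx s b]; ring
      _ = ∑ s, gL x a s * Q x s b := hBq b a
  have hQWe : ∀ a b, ∑ s, Q x a s * W x s b = if a = b then (1:ℝ) else 0 := by
    intro a b
    have h0 := congrFun (congrFun hQWm a) b
    simpa [Matrix.mul_apply, Matrix.one_apply] using h0
  have hWQe : ∀ a b, ∑ s, W x a s * Q x s b = if a = b then (1:ℝ) else 0 := by
    intro a b
    have h0 := congrFun (congrFun hWQm a) b
    simpa [Matrix.mul_apply, Matrix.one_apply] using h0
  have hGWe : ∀ k0 m0, ∑ s, g x k0 s * W x m0 s = ∑ s, g x m0 s * W x k0 s := by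
    have hm := mat_GW (g x) (gL x) (Q x) (W x) hgm hLGm hQWm hWQm hLQmat
    intro k0 m0
    have h2 := congrFun (congrFun hm k0) m0
    rw [Matrix.mul_apply, Matrix.mul_apply] at h2
    calc ∑ s, g x k0 s * W x m0 s = ∑ s, g x k0 s * (W x)ᵀ s m0 := rfl
      _ = ∑ s, W x k0 s * g x s m0 := h2
      _ = ∑ s, g x m0 s * W x k0 s := by
          apply Finset.sum_congr rfl; intro s _
          rw [hgs x hx s m0]; ring
  have hGAWe : ∀ a k0 i0, ∑ m, (∑ s, g x k0 s * christoffel g gL a s m x) * W x m i0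
      = ∑ m, W x k0 m * (∑ s, g x m s * christoffel g gL a s i0 x) := by
    intro a k0 i0
    set A := (Matrix.of fun b c => christoffel g gL a b c x) with hAdef
    have hA : A * Q x = (Q x)ᵀ * A := by
      ext b c
      rw [Matrix.mul_apply, Matrix.mul_apply]
      calc ∑ m, A b m * Q x m c = ∑ m, christoffel g gL a b m x * Q x m c := rfl
        _ = ∑ m, christoffel g gL a c m x * Q x m b := hCq a b c
        _ = ∑ m, (Q x)ᵀ b m * A m c := by
            apply Finset.sum_congr rfl; intro m _
            rw [Matrix.transpose_apply, hAdef]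
            show christoffel g gL a c m x * Q x m b
              = Q x m b * (Matrix.of fun b c => christoffel g gL a b c x) m c
            rw [Matrix.of_apply, hΓsym x hx a c m]
            ring
    have hm := mat_GAW (g x) (gL x) (Q x) (W x) A hgm hLGm hQWm hWQm hLQmat hA
    have h2 := congrFun (congrFun hm k0) i0
    rw [Matrix.mul_apply, Matrix.mul_apply] at h2
    calc ∑ m, (∑ s, g x k0 s * christoffel g gL a s m x) * W x m i0
        = ∑ m, (g x * A) k0 m * W x m i0 := by
          apply Finset.sum_congr rfl; intro m _
          rw [Matrix.mul_apply]
          simp only [hAdef, Matrix.of_apply]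
      _ = ∑ m, W x k0 m * (g x * A) m i0 := h2
      _ = ∑ m, W x k0 m * (∑ s, g x m s * christoffel g gL a s i0 x) := by
          apply Finset.sum_congr rfl; intro m _
          rw [Matrix.mul_apply]
          simp only [hAdef, Matrix.of_apply]
  -- ===== chain rule =====
  set cb := fun (s l a : Fin n) => pd (fun v => gbL v s l) a (phi x) with hcbdef
  have hphixUb : phi x ∈ phi '' U := ⟨x, hx, rfl⟩
  have hchain : ∀ s l m0, pd (fun z => gL z s l) m0 x = ∑ a, cb s l a * Q x a m0 := by
    intro s l m0
    have h0 := pd_chain hU_open hx hUb_open hphixUb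
      (fun i0 => diffAt hU_open hx (hphi_smooth i0))
      (diffAt hUb_open hphixUb (hgbL_smooth s l))
      (fun y hy => (congrFun (congrFun (hgbL y hy) s) l).symm)
      m0
    rw [h0]
    apply Finset.sum_congr rfl; intro a _
    rw [hJac x hx a m0, hcbdef]
  have hcbW : ∀ s l i0, cb s l i0
      = ∑ m, (∑ a, (christoffel g gL a m s x * gL x a l
          + gL x s a * christoffel g gL a m l x)) * W x m i0 := by
    intro s l i0
    have h1 : ∑ m, pd (fun z => gL z s l) m x * W x m i0 = cb s l i0 := by
      rw [Finset.sum_congr rfl (fun m _ => by rw [hchain s l m])]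
      exact contract_r hQWe (fun a => cb s l a) i0
    rw [← h1]
    apply Finset.sum_congr rfl; intro m _
    rw [hcompat x hx s l m]
  -- ===== final assembly =====
  have hgoal : ∀ l, christoffel gb gbL k i l (phi x)
      = (1/2) * ∑ s, g x k s * (cb s l i + cb s i l - cb i l s) := by
    intro l
    show (1/2) * ∑ s, gb (phi x) k s * (pd (fun v => gbL v s l) i (phi x)
        + pd (fun v => gbL v s i) l (phi x) - pd (fun v => gbL v i l) s (phi x)) = _
    congr 1
    apply Finset.sum_congr rfl; intro s _
    rw [congrFun (congrFun (hgb x hx) k) s, hcbdef]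
  rw [Finset.sum_congr rfl (fun l (_ : l ∈ Finset.univ) => by rw [hgoal l])]
  exact key_alg_s4 (fun a b => g x a b) (fun a b => gL x a b) (fun a b => Q x a b)
    (fun a b => W x a b) (fun a b c => christoffel g gL a b c x) cb
    (fun a b => hgs x hx a b) (fun a b => hgLs x hx a b) (fun a b => hGLe x hx a b)
    hQWe hWQe hGWe (fun a b c => hΓsym x hx a b c) hCq hGAWe hcbW k i j
end
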